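/- With R = K⟦f₁,…,f_s⟧ as in the context, the set {f₁,…,f_s} is a basis of R (i.e. o(R) = ⟨o(f₁),…,o(f_s)⟩) if and only if for every f ∈ R and every pair (g,r) with g ∈ R, r ∈ K⟦x⟧, f = g + r and supp(r) ⊆ ℕ∖⟨o(f₁),…,o(f_s)⟩, one has r = 0. -/

import Mathlib

/-!
If `o(R) = ⟨o(f₁),…,o(f_s)⟩` and `F = g + r` with `F, g ∈ R`, then `r ∈ R`, so a nonzero `r`
would have its order, a point of `supp r`, in the monoid. Conversely, `R` is `x`-adically closed
and contains an element of every order in the monoid, so eliminating coefficients of `h ∈ R`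
one degree at a time (the limit of this process stays in `R`) writes `h = G + r` with `G ∈ R` and
`supp r` off the monoid. If `o(h)` were not in the monoid, nothing is subtracted up to degree
`o(h)`, so `r ≠ 0`.
-/

set_option synthInstance.maxHeartbeats 1000000
set_option maxHeartbeats 1000000

open PowerSeries

/-- The order of a formal power series: the least `i` such that the coefficient of `x^i`
is nonzero (junk value `0` for the zero series). -/
noncomputable def ord (K : Type*) [Field K] (f : PowerSeries K) : ℕ :=
  sInf {i | coeff (R := K) i f ≠ 0}

/-- The set of orders of nonzero elements of a subalgebra `R ⊆ K⟦x⟧`. -/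
def oSet (K : Type*) [Field K] (R : Subalgebra K (PowerSeries K)) : Set ℕ :=
  {n | ∃ f ∈ R, f ≠ 0 ∧ ord K f = n}

/-- The quotient `K⟦x⟧/R` has finite length as an `R`-module. -/
def FiniteLengthQuot (K : Type*) [Field K] (R : Subalgebra K (PowerSeries K)) : Prop :=
  IsFiniteLength R (PowerSeries K ⧸ LinearMap.range (Algebra.linearMap R (PowerSeries K)))

/-- The closure of a subalgebra of `K⟦x⟧` in the `x`-adic topology:
`f` belongs to the closure of `S` iff for every `n` there is an element of `S`
agreeing with `f` on all coefficients up to `n`. -/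
def adicClosure {K : Type*} [Field K] (S : Subalgebra K (PowerSeries K)) :
    Subalgebra K (PowerSeries K) where
  carrier := {f | ∀ n : ℕ, ∃ p ∈ S, ∀ i ≤ n, coeff (R := K) i f = coeff (R := K) i p}
  add_mem' := by
    intro f g hf hg n
    obtain ⟨p, hpS, hp⟩ := hf n
    obtain ⟨q, hqS, hq⟩ := hg n
    exact ⟨p + q, S.add_mem hpS hqS, fun i hi => by
      simp [map_add, hp i hi, hq i hi]⟩
  mul_mem' := by
    intro f g hf hg n
    obtain ⟨p, hpS, hp⟩ := hf n
    obtain ⟨q, hqS, hq⟩ := hg n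
    refine ⟨p * q, S.mul_mem hpS hqS, fun i hi => ?_⟩
    rw [coeff_mul, coeff_mul]
    refine Finset.sum_congr rfl fun ab hab => ?_
    have h := Finset.HasAntidiagonal.mem_antidiagonal.mp hab
    rw [hp ab.1 (by omega), hq ab.2 (by omega)]
  algebraMap_mem' := fun r => fun n => ⟨algebraMap K _ r, S.algebraMap_mem r, fun i _ => rfl⟩

/-- `K⟦f₁,…,f_s⟧`, the subalgebra of `K⟦x⟧` consisting of all power series of the form
`P(f₁,…,f_s)` with `P ∈ K⟦X₁,…,X_s⟧` (for `fᵢ` of positive order), realized as the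
`x`-adic closure of the subalgebra generated by `f₁, …, f_s`; this closure coincides with
the image of the substitution homomorphism `K⟦X₁,…,X_s⟧ → K⟦x⟧`, `Xᵢ ↦ fᵢ`. -/
noncomputable def seriesAlgebra {K : Type*} [Field K] {s : ℕ} (f : Fin s → PowerSeries K) :
    Subalgebra K (PowerSeries K) :=
  adicClosure (Algebra.adjoin K (Set.range f))

section Order

variable {K : Type*} [Field K]

theorem ord_eq_toNat_order (f : PowerSeries K) : ord K f = f.order.toNat := by
  by_cases hf : f = 0
  · simp [ord, hf]
  · obtain ⟨hn, hlt⟩ := order_eq_nat.mp (ENat.natCast_toNat (order_eq_top.not.mpr hf)).symm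
    refine le_antisymm (Nat.sInf_le hn) (le_csInf ⟨_, hn⟩ fun i hi => ?_)
    by_contra! h
    exact hi (hlt i h)

theorem coeff_ord_ne_zero {f : PowerSeries K} (hf : f ≠ 0) : coeff (ord K f) f ≠ 0 := by
  rw [ord_eq_toNat_order]
  exact coeff_order hf

theorem coeff_of_lt_ord {f : PowerSeries K} {i : ℕ} (hi : i < ord K f) : coeff i f = 0 := by
  by_cases hf : f = 0
  · simp [hf]
  · rw [ord_eq_toNat_order] at hi
    refine coeff_of_lt_order i ?_
    rw [← ENat.natCast_toNat (order_eq_top.not.mpr hf)]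
    exact_mod_cast hi

theorem ord_one : ord K 1 = 0 := by
  simp [ord_eq_toNat_order]

theorem ord_mul {g h : PowerSeries K} (hg : g ≠ 0) (hh : h ≠ 0) :
    ord K (g * h) = ord K g + ord K h := by
  simp only [ord_eq_toNat_order, order_mul]
  exact ENat.toNat_add (order_eq_top.not.mpr hg) (order_eq_top.not.mpr hh)

end Order

section OrderSet

variable {K : Type*} [Field K] (R : Subalgebra K (PowerSeries K))

def oSubmonoid : AddSubmonoid ℕ where
  carrier := oSet K R
  zero_mem' := ⟨1, one_mem R, one_ne_zero, ord_one⟩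
  add_mem' := by
    rintro _ _ ⟨g, hgR, hg, rfl⟩ ⟨h, hhR, hh, rfl⟩
    exact ⟨g * h, mul_mem hgR hhR, mul_ne_zero hg hh, ord_mul hg hh⟩

variable {R}

theorem ord_mem_oSet {g : PowerSeries K} (hg : g ∈ R) : ord K g ∈ oSet K R := by
  by_cases hg0 : g = 0
  · rw [hg0, show ord K 0 = 0 by simp [ord]]
    exact (oSubmonoid R).zero_mem
  · exact ⟨g, hg, hg0, rfl⟩

theorem closure_ord_subset_oSet {s : ℕ} {f : Fin s → PowerSeries K} (hf : ∀ j, f j ∈ R) :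
    ↑(AddSubmonoid.closure (Set.range fun j => ord K (f j))) ⊆ oSet K R :=
  AddSubmonoid.closure_le (S := oSubmonoid R).mpr <| Set.range_subset_iff.mpr fun j =>
    ord_mem_oSet (hf j)

theorem eq_zero_of_coeff_oSet_eq_zero {r : PowerSeries K} (hr : r ∈ R)
    (hcoeff : ∀ i ∈ oSet K R, coeff i r = 0) : r = 0 := by
  by_contra hr0
  exact coeff_ord_ne_zero hr0 (hcoeff _ ⟨r, hr, hr0, rfl⟩)

end OrderSet

section AdicClosure

variable {K : Type*} [Field K] {S : Subalgebra K (PowerSeries K)}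

theorem le_adicClosure (S : Subalgebra K (PowerSeries K)) : S ≤ adicClosure S :=
  fun p hp _ => ⟨p, hp, fun _ _ => rfl⟩

theorem mem_adicClosure_of_approx {g : PowerSeries K}
    (h : ∀ n, ∃ p ∈ adicClosure S, ∀ i ≤ n, coeff i g = coeff i p) : g ∈ adicClosure S := by
  intro n
  obtain ⟨p, hp, hgp⟩ := h n
  obtain ⟨q, hq, hpq⟩ := hp n
  exact ⟨q, hq, fun i hi => (hgp i hi).trans (hpq i hi)⟩

end AdicClosure

section Greedy

variable {K : Type*} [Field K] (e : ℕ → PowerSeries K) (h : PowerSeries K)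

/-- Step `m` cancels the `x^m`-coefficient of `h - g` by a multiple of `e m` (meant to have order
`≥ m`); when `coeff m (e m) = 0` the step adds nothing, as division by zero gives `0`. -/
noncomputable def greedyApprox : ℕ → PowerSeries K
  | 0 => 0
  | m + 1 => greedyApprox m + (coeff m (h - greedyApprox m) / coeff m (e m)) • e m

noncomputable def greedyLimit : PowerSeries K :=
  mk fun i => coeff i (greedyApprox e h (i + 1))

variable {e h}

theorem greedyApprox_mem {R : Subalgebra K (PowerSeries K)} (he : ∀ m, e m ∈ R) (k : ℕ) :
    greedyApprox e h k ∈ R := by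
  induction k with
  | zero => exact zero_mem R
  | succ m ih => exact add_mem ih (Subalgebra.smul_mem R (he m) _)

theorem greedyApprox_eq_zero {n : ℕ} (hh : ∀ i < n, coeff i h = 0) (hn : coeff n (e n) = 0)
    {k : ℕ} (hk : k ≤ n + 1) : greedyApprox e h k = 0 := by
  induction k with
  | zero => rfl
  | succ m ih =>
    have hc : coeff m (h - greedyApprox e h m) / coeff m (e m) = 0 := by
      rcases (Nat.lt_succ_iff.mp hk).lt_or_eq with hm | rfl
      · rw [ih (by omega), sub_zero, hh m hm, zero_div]
      · rw [hn, div_zero]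
    rw [greedyApprox, hc, zero_smul, add_zero, ih (by omega)]

theorem coeff_greedyApprox_succ_of_lt (he : ∀ m, ∀ i < m, coeff i (e m) = 0)
    {i m : ℕ} (hi : i < m) :
    coeff i (greedyApprox e h (m + 1)) = coeff i (greedyApprox e h m) := by
  simp [greedyApprox, he m i hi]

theorem coeff_greedyApprox_of_lt (he : ∀ m, ∀ i < m, coeff i (e m) = 0)
    {i k : ℕ} (hik : i < k) :
    coeff i (greedyApprox e h k) = coeff i (greedyApprox e h (i + 1)) := by
  induction k, hik using Nat.le_induction with
  | base => rfl
  | succ k hik ih => rw [coeff_greedyApprox_succ_of_lt he hik, ih]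

theorem coeff_greedyLimit (he : ∀ m, ∀ i < m, coeff i (e m) = 0)
    (i : ℕ) {k : ℕ} (hik : i < k) :
    coeff i (greedyLimit e h) = coeff i (greedyApprox e h k) := by
  rw [greedyLimit, coeff_mk, coeff_greedyApprox_of_lt he hik]

theorem greedyLimit_mem_adicClosure (he : ∀ m, ∀ i < m, coeff i (e m) = 0)
    {S : Subalgebra K (PowerSeries K)}
    (hS : ∀ m, e m ∈ adicClosure S) : greedyLimit e h ∈ adicClosure S :=
  mem_adicClosure_of_approx fun n =>
    ⟨_, greedyApprox_mem hS (n + 1), fun i hi => coeff_greedyLimit he i (Nat.lt_succ_of_le hi)⟩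

theorem coeff_sub_greedyLimit_eq_zero (he : ∀ m, ∀ i < m, coeff i (e m) = 0)
    {i : ℕ} (hi : coeff i (e i) ≠ 0) :
    coeff i (h - greedyLimit e h) = 0 := by
  rw [map_sub, coeff_greedyLimit he i (Nat.lt_succ_self i), greedyApprox, map_add, map_smul,
    smul_eq_mul, div_mul_cancel₀ _ hi, map_sub]
  ring

theorem coeff_greedyLimit_eq_zero (he : ∀ m, ∀ i < m, coeff i (e m) = 0)
    {n : ℕ} (hh : ∀ i < n, coeff i h = 0)
    (hn : coeff n (e n) = 0) : coeff n (greedyLimit e h) = 0 := by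
  rw [coeff_greedyLimit he n (Nat.lt_succ_self n), greedyApprox_eq_zero hh hn le_rfl, map_zero]

end Greedy

theorem exists_mem_adicClosure_coeff_sub_eq_zero {K : Type*} [Field K]
    {S : Subalgebra K (PowerSeries K)} {T : Set ℕ} (hT : T ⊆ oSet K (adicClosure S))
    (h : PowerSeries K) :
    ∃ G ∈ adicClosure S, (∀ i ∈ T, coeff i (h - G) = 0) ∧
      ∀ n ∉ T, (∀ i < n, coeff i h = 0) → coeff n G = 0 := by
  have hwit : ∀ m, ∃ w ∈ adicClosure S, (∀ i < m, coeff i w = 0) ∧ (coeff m w ≠ 0 ↔ m ∈ T) := by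
    intro m
    by_cases hm : m ∈ T
    · obtain ⟨w, hwS, hw0, rfl⟩ := hT hm
      exact ⟨w, hwS, fun i => coeff_of_lt_ord, iff_of_true (coeff_ord_ne_zero hw0) hm⟩
    · exact ⟨0, zero_mem _, fun _ _ => map_zero _, by simpa using hm⟩
  choose e heS hlt hlead using hwit
  refine ⟨greedyLimit e h, greedyLimit_mem_adicClosure hlt heS,
    fun i hi => coeff_sub_greedyLimit_eq_zero hlt ((hlead i).mpr hi),
    fun n hn hh => coeff_greedyLimit_eq_zero hlt hh (not_not.mp (mt (hlead n).mp hn))⟩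

theorem stmt_5_general (K : Type*) [Field K] {s : ℕ} (f : Fin s → PowerSeries K) :
    (oSet K (seriesAlgebra f)
        = ↑(AddSubmonoid.closure (Set.range fun j => ord K (f j)))) ↔
      (∀ F ∈ seriesAlgebra f, ∀ g ∈ seriesAlgebra f, ∀ r : PowerSeries K,
        F = g + r →
        (∀ i : ℕ, coeff (R := K) i r ≠ 0 →
          i ∉ AddSubmonoid.closure (Set.range fun j => ord K (f j))) →
        r = 0) := by
  have hclosure := closure_ord_subset_oSet fun j =>
    le_adicClosure _ (Algebra.subset_adjoin (Set.mem_range_self j) : f j ∈ Algebra.adjoin K _)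
  constructor
  · rintro heq F hF g hg r rfl hsupp
    refine eq_zero_of_coeff_oSet_eq_zero (by simpa using sub_mem hF hg) fun i hi => ?_
    by_contra hr
    exact hsupp i hr (by rwa [← SetLike.mem_coe, ← heq])
  · refine fun huniq => (Set.Subset.antisymm ?_ hclosure)
    rintro _ ⟨h, hhR, hh0, rfl⟩
    by_contra hord
    obtain ⟨G, hGR, hrem, hGord⟩ := exists_mem_adicClosure_coeff_sub_eq_zero hclosure h
    have hhG : h - G = 0 :=
      huniq h hhR G hGR (h - G) (add_sub_cancel G h).symm fun i hi hiS => hi (hrem i hiS)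
    have hG : coeff (ord K h) G = 0 := hGord _ hord fun i => coeff_of_lt_ord
    rw [← sub_eq_zero.mp hhG] at hG
    exact coeff_ord_ne_zero hh0 hG

/-- `{f₁,…,f_s}` is a basis of `R = K⟦f₁,…,f_s⟧` (i.e. `o(R) = ⟨o(f₁),…,o(f_s)⟩`) iff for
every `f ∈ R`, every decomposition `f = g + r` with `g ∈ R` and
`supp(r) ⊆ ℕ ∖ ⟨o(f₁),…,o(f_s)⟩` forces `r = 0`. -/
theorem stmt_5 (K : Type*) [Field K] {s : ℕ} (f : Fin s → PowerSeries K)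
    (hf0 : ∀ i, f i ≠ 0) (hford : ∀ i, 0 < ord K (f i))
    (hlen : FiniteLengthQuot K (seriesAlgebra f)) :
    (oSet K (seriesAlgebra f)
        = ↑(AddSubmonoid.closure (Set.range fun j => ord K (f j)))) ↔
      (∀ F ∈ seriesAlgebra f, ∀ g ∈ seriesAlgebra f, ∀ r : PowerSeries K,
        F = g + r →
        (∀ i : ℕ, coeff (R := K) i r ≠ 0 →
          i ∉ AddSubmonoid.closure (Set.range fun j => ord K (f j))) →
        r = 0) :=
  stmt_5_general K f
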